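/- arXiv:1809.03108 — 4 statements merged into one kernel-verified Lean document; each statement's English description precedes it below -/
import Mathlib

section
/- The ω-language L = (a+b)*(a^ω ∪ b^ω) over alphabet {a,b} (ω-words that are eventually constantly a or eventually constantly b) has a trivial right congruence: for all finite words x, y and ω-words w, xw ∈ L iff yw ∈ L. Moreover L is not of the form Σ*R^ω for any single language R of finite words. -/
namespace OmegaRC

variable {σ : Type*} {Q : Type*}

/-- Concatenation of a finite word with an ω-word. -/
def wcat (x : List σ) (w : ℕ → σ) : ℕ → σ :=
  fun n => if h : n < x.length then x.get ⟨n, h⟩ else w (n - x.length)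

/-- Canonical right congruence of an ω-language: `x ∼_L y`. -/
def RC (L : Set (ℕ → σ)) (x y : List σ) : Prop :=
  ∀ w : ℕ → σ, wcat x w ∈ L ↔ wcat y w ∈ L

/-- The periodic ω-word `v^ω` (for nonempty `v`). -/
def wrep [Inhabited σ] (v : List σ) : ℕ → σ :=
  fun n => v.getD (n % v.length) default

/-- Finite power `v^n` of a finite word. -/
def wpow (v : List σ) (n : ℕ) : List σ := (List.replicate n v).flatten

/-- The finite segment `w[i..j)` of an ω-word. -/
def segment (w : ℕ → σ) (i j : ℕ) : List σ :=
  (List.range (j - i)).map (fun k => w (i + k))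

/-- `R^ω`: ω-words that are infinite concatenations of (nonempty) words of `R`. -/
def omegaPow (R : Set (List σ)) : Set (ℕ → σ) :=
  { w | ∃ f : ℕ → ℕ, f 0 = 0 ∧ StrictMono f ∧ ∀ i, segment w (f i) (f (i + 1)) ∈ R }

/-- A complete deterministic transition structure. -/
structure DetAut (σ : Type*) (Q : Type*) where
  init : Q
  step : Q → σ → Q

/-- Extended transition function on finite words. -/
def DetAut.runFin (A : DetAut σ Q) (q : Q) (x : List σ) : Q := x.foldl A.step q

/-- The run of a deterministic automaton on an ω-word. -/
def DetAut.run (A : DetAut σ Q) (w : ℕ → σ) : ℕ → Q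
  | 0 => A.init
  | n + 1 => A.step (A.run w n) (w n)

/-- The set of states occurring infinitely often in a run. -/
def infSet (r : ℕ → Q) : Set Q := { q | ∀ n, ∃ m, n ≤ m ∧ r m = q }

/-- Muller acceptance. -/
def MullerAcc (A : DetAut σ Q) (acc : Set (Set Q)) (w : ℕ → σ) : Prop :=
  infSet (A.run w) ∈ acc

/-- Büchi acceptance. -/
def BuchiAcc (A : DetAut σ Q) (F : Set Q) (w : ℕ → σ) : Prop :=
  ∀ n, ∃ m, n ≤ m ∧ A.run w m ∈ F

/-- co-Büchi acceptance. -/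
def CoBuchiAcc (A : DetAut σ Q) (F : Set Q) (w : ℕ → σ) : Prop :=
  ∃ n, ∀ m, n ≤ m → A.run w m ∉ F

/-- Colors occurring infinitely often in a run. -/
def infColors (κ : Q → ℕ) (r : ℕ → Q) : Set ℕ := { c | ∀ n, ∃ m, n ≤ m ∧ κ (r m) = c }

/-- Parity (min-odd) acceptance. -/
def ParityAcc (A : DetAut σ Q) (κ : Q → ℕ) (w : ℕ → σ) : Prop :=
  ∃ c ∈ infColors κ (A.run w), (∀ c' ∈ infColors κ (A.run w), c ≤ c') ∧ Odd c

/-- `S` is strongly connected. -/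
def IsSCC (A : DetAut σ Q) (S : Set Q) : Prop :=
  ∀ s1 ∈ S, ∀ s2 ∈ S, ∃ x : List σ, x ≠ [] ∧ A.runFin s1 x = s2

/-- Transitions taken infinitely often in the run on `w`. -/
def infTrans (A : DetAut σ Q) (w : ℕ → σ) : Set (Q × σ × Q) :=
  { t | ∀ n, ∃ m, n ≤ m ∧ (A.run w m, w m, A.run w (m + 1)) = t }

/-- Transition-table (transition-based Muller) acceptance. -/
def TransAcc (A : DetAut σ Q) (acc : Set (Set (Q × σ × Q))) (w : ℕ → σ) : Prop :=
  infTrans A w ∈ acc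

/-- Non-counting ω-language. -/
def NonCounting (L : Set (ℕ → σ)) : Prop :=
  ∃ n₀ : ℕ, ∀ n > n₀, ∀ u v : List σ, ∀ w : ℕ → σ,
    (wcat (u ++ wpow v n) w ∈ L ↔ wcat (u ++ wpow v (n + 1)) w ∈ L)

/-- `L` is respective of its right congruence. -/
def Respective [Inhabited σ] (L : Set (ℕ → σ)) : Prop :=
  ∃ n₀ : ℕ, ∀ n > n₀, ∀ x u : List σ, u ≠ [] →
    wcat x (wrep u) ∈ L → RC L (x ++ wpow u n) (x ++ wpow u (n + 1))

/-! Membership in `L` depends only on a tail of the word, so the right congruence is trivial.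
If `L = Σ*R^ω`, the words `a^ω, b^ω ∈ L` force blocks `a^k, b^m ∈ R`; alternating them gives
`(a^k b^m)^ω ∈ R^ω ⊆ L`, which is eventually neither constantly `a` nor constantly `b`. -/

theorem wcat_nil (w : ℕ → σ) : wcat [] w = w := rfl

theorem wcat_add_length (x : List σ) (w : ℕ → σ) (n : ℕ) : wcat x w (n + x.length) = w n := by
  simp [wcat]

theorem eventually_wcat_eq_iff (x : List σ) (w : ℕ → σ) (c : σ) :
    (∃ n, ∀ i ≥ n, wcat x w i = c) ↔ ∃ n, ∀ i ≥ n, w i = c := by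
  constructor
  · rintro ⟨n, h⟩
    exact ⟨n, fun i hi => wcat_add_length x w i ▸ h _ (by omega)⟩
  · rintro ⟨n, h⟩
    refine ⟨n + x.length, fun i hi => ?_⟩
    obtain ⟨j, rfl⟩ := Nat.exists_eq_add_of_le' hi
    rw [← Nat.add_assoc, wcat_add_length]
    exact h _ (by omega)

theorem eq_const_of_wcat_eq_const {x : List σ} {w : ℕ → σ} {c : σ}
    (h : wcat x w = fun _ => c) : w = fun _ => c :=
  funext fun n => wcat_add_length x w n ▸ congrFun h (n + x.length)

theorem segment_const (c : σ) (i j : ℕ) :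
    segment (fun _ => c) i j = List.replicate (j - i) c := by
  simp [segment, List.map_const']

theorem exists_replicate_mem_of_const_mem_omegaPow {R : Set (List σ)} {c : σ}
    (h : (fun _ => c) ∈ omegaPow R) : ∃ k ≠ 0, List.replicate k c ∈ R := by
  obtain ⟨f, hf0, hf, hfR⟩ := h
  refine ⟨f 1, (hf0 ▸ hf zero_lt_one).ne', ?_⟩
  simpa [segment_const, hf0] using hfR 0

section Periodic

variable [Inhabited σ]

theorem wrep_mul_add (z : List σ) (t : ℕ) {i : ℕ} (hi : i < z.length) :
    wrep z (t * z.length + i) = z[i] := by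
  simp [wrep, Nat.mod_eq_of_lt hi, hi]

theorem segment_wrep (z : List σ) (t : ℕ) {i j : ℕ} (hij : i ≤ j) (hj : j ≤ z.length) :
    segment (wrep z) (t * z.length + i) (t * z.length + j) = (z.take j).drop i := by
  apply List.ext_getElem
  · simp only [segment, List.length_map, List.length_range, List.length_drop, List.length_take]
    omega
  · intro n hn _
    simp only [segment, List.getElem_map, List.getElem_range, List.getElem_drop,
      List.getElem_take]
    rw [Nat.add_assoc, wrep_mul_add z t (by simp [segment] at hn; omega)]

theorem wrep_append_mem_omegaPow {R : Set (List σ)} {u v : List σ} (hu : u ∈ R) (hv : v ∈ R)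
    (hu0 : u ≠ []) (hv0 : v ≠ []) : wrep (u ++ v) ∈ omegaPow R := by
  have hlen : (u ++ v).length = u.length + v.length := List.length_append
  have hu' := List.length_pos_iff.mpr hu0
  have hv' := List.length_pos_iff.mpr hv0
  set p := (u ++ v).length
  set f : ℕ → ℕ := fun n => n / 2 * p + n % 2 * u.length
  -- the `+ 0` lets `segment_wrep` apply with `i = 0`
  have f_even (t : ℕ) : f (2 * t) = t * p + 0 := by simp [f]
  have f_odd (t : ℕ) : f (2 * t + 1) = t * p + u.length := by
    simp only [f, show (2 * t + 1) / 2 = t by omega, show (2 * t + 1) % 2 = 1 by omega, one_mul]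
  have f_even_succ (t : ℕ) : f (2 * t + 1 + 1) = t * p + p := by
    rw [show 2 * t + 1 + 1 = 2 * (t + 1) by ring, f_even]; ring
  refine ⟨f, by simp [f], strictMono_nat_of_lt_succ fun n => ?_, fun n => ?_⟩
  · obtain ⟨t, rfl | rfl⟩ := Nat.even_or_odd' n
    · rw [f_even, f_odd]; omega
    · rw [f_odd, f_even_succ]; omega
  · obtain ⟨t, rfl | rfl⟩ := Nat.even_or_odd' n
    · rw [f_even, f_odd, segment_wrep _ _ (Nat.zero_le _) (by omega)]
      simpa using hu
    · rw [f_odd, f_even_succ, segment_wrep _ _ (by omega) le_rfl, List.take_length]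
      simpa using hv

theorem eq_of_mem_of_eventually_wrep_eq {z : List σ} {c : σ}
    (h : ∃ n, ∀ i ≥ n, wrep z i = c) {d : σ} (hd : d ∈ z) : d = c := by
  obtain ⟨i, hi, rfl⟩ := List.getElem_of_mem hd
  obtain ⟨n, hn⟩ := h
  rw [← wrep_mul_add z n hi]
  exact hn _ (le_add_right (Nat.le_mul_of_pos_right n (by omega)))

end Periodic

/-- `(a+b)*(a^ω ∪ b^ω)` has a trivial right congruence but is not `Σ*R^ω`. -/
theorem eventually_constant_trivial_rc_not_single_omegaPow :
    let L : Set (ℕ → Bool) :=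
      { w | (∃ n, ∀ i ≥ n, w i = true) ∨ (∃ n, ∀ i ≥ n, w i = false) }
    (∀ x y : List Bool, RC L x y) ∧
    ¬ ∃ R : Set (List Bool),
        L = { v | ∃ (x : List Bool) (w : ℕ → Bool), w ∈ omegaPow R ∧ v = wcat x w } := by
  intro L
  refine ⟨fun x y w => ?_, ?_⟩
  · simp only [L, Set.mem_ofPred_eq, eventually_wcat_eq_iff]
  rintro ⟨R, hR⟩
  have block (c : Bool) : ∃ k ≠ 0, List.replicate k c ∈ R := by
    have hc : (fun _ => c) ∈ L := by cases c <;> simp [L]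
    obtain ⟨x, w, hw, hxw⟩ := hR ▸ hc
    exact exists_replicate_mem_of_const_mem_omegaPow (eq_const_of_wcat_eq_const hxw.symm ▸ hw)
  obtain ⟨k, hk, hkR⟩ := block true
  obtain ⟨m, hm, hmR⟩ := block false
  have hz : wrep (List.replicate k true ++ List.replicate m false) ∈ L :=
    hR ▸ ⟨[], _, wrep_append_mem_omegaPow hkR hmR (by simpa using hk) (by simpa using hm),
      (wcat_nil _).symm⟩
  rcases hz with h | h
  · exact absurd (eq_of_mem_of_eventually_wrep_eq h (d := false) (by simp [hm])) (by simp)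
  · exact absurd (eq_of_mem_of_eventually_wrep_eq h (d := true) (by simp [hk])) (by simp)

end OmegaRC
end

section
/- If a regular ω-language L has a trivial right congruence (|∼_L| = 1), then L can be written as Σ*(R_1^ω ∪ ... ∪ R_k^ω) for some finite family of regular languages R_1, ..., R_k of finite words. Specifically, taking a deterministic Muller automaton M for L with accepting sets S_1, ..., S_k (each strongly connected) with all states reachable, and letting R_i be the set of finite words that loop from a fixed state s_i ∈ S_i back to s_i while visiting exactly the states of S_i, one has L = Σ*(R_1^ω ∪ ... ∪ R_k^ω). -/
namespace OmegaRC

variable {σ : Type*} {Q : Type*}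

/-!
If `v ∈ L`, its run eventually stays inside its infinity set `S i` and returns to `s i` infinitely
often. Cutting `v` at returns to `s i` spaced so that every state of `S i` is visited in between
writes a suffix of `v` as a product of words of `R i`. Conversely, the run from `s i` on a word of
`(R i)^ω` has infinity set exactly `S i`; prefixing it with a word that leads from the initial
state to `s i` gives a word of `L`, and since the right congruence is trivial any other prefix
does too.
-/

section Segment

variable (v : ℕ → σ)

lemma length_segment (m n : ℕ) : (segment v m n).length = n - m := by
  simp [segment]

lemma segment_eq_cons {m n : ℕ} (h : m < n) : segment v m n = v m :: segment v (m + 1) n := by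
  obtain ⟨d, rfl⟩ := Nat.exists_eq_add_of_lt h
  simp only [segment, show m + d + 1 - m = d + 1 by omega, show m + d + 1 - (m + 1) = d by omega,
    List.range_succ_eq_map, List.map_cons, List.map_map]
  congr 2
  funext k
  simp only [Function.comp_apply]
  congr 1
  omega

lemma segment_shift (c a b : ℕ) :
    segment (fun k => v (k + c)) a b = segment v (c + a) (c + b) := by
  simp only [segment, show c + b - (c + a) = b - a by omega]
  exact List.map_congr_left fun k _ => congrArg v (by omega)

lemma wcat_segment_zero (n : ℕ) : wcat (segment v 0 n) (fun k => v (k + n)) = v := by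
  funext m
  by_cases h : m < n
  · simp [wcat, segment, h]
  · simp only [wcat, length_segment, Nat.sub_zero, dif_neg h]
    congr 1
    omega

end Segment

lemma segment_wcat_length (x : List σ) (w : ℕ → σ) : segment (wcat x w) 0 x.length = x := by
  apply List.ext_getElem (by simp [segment])
  intro n h _
  simp only [length_segment, Nat.sub_zero] at h
  simp [segment, wcat, h]

lemma segment_wcat_add (x : List σ) (w : ℕ → σ) (a b : ℕ) :
    segment (wcat x w) (x.length + a) (x.length + b) = segment w a b := by
  simp only [segment, show x.length + b - (x.length + a) = b - a by omega]
  refine List.map_congr_left fun k _ => ?_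
  simp only [wcat, dif_neg (show ¬(x.length + a + k < x.length) by omega)]
  congr 1
  omega

lemma exists_le_lt_succ_of_strictMono {p : ℕ → ℕ} (hp : StrictMono p) {m : ℕ} (hm : p 0 ≤ m) :
    ∃ j, p j ≤ m ∧ m < p (j + 1) := by
  induction m, hm using Nat.le_induction with
  | base => exact ⟨0, le_rfl, hp (Nat.lt_succ_self 0)⟩
  | succ m _ ih =>
    obtain ⟨j, hj, hjm⟩ := ih
    by_cases h : m + 1 < p (j + 1)
    · exact ⟨j, by omega, h⟩
    · exact ⟨j + 1, by omega, by have := hp (show j + 1 < j + 1 + 1 by omega); omega⟩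

lemma exists_wcat_mem_omegaPow {R : Set (List σ)} {v : ℕ → σ} {n : ℕ → ℕ} (hn : StrictMono n)
    (hR : ∀ j, segment v (n j) (n (j + 1)) ∈ R) : ∃ x w, w ∈ omegaPow R ∧ v = wcat x w := by
  refine ⟨segment v 0 (n 0), fun k => v (k + n 0), ⟨fun j => n j - n 0, by simp, ?_, fun j => ?_⟩,
    (wcat_segment_zero v (n 0)).symm⟩
  · intro i j hij
    have := hn hij
    have := hn.monotone (Nat.zero_le i)
    dsimp only
    omega
  · have h0j := hn.monotone (Nat.zero_le j)
    have h0j' := hn.monotone (Nat.zero_le (j + 1))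
    rw [segment_shift, Nat.add_sub_cancel' h0j, Nat.add_sub_cancel' h0j']
    exact hR j

section InfSet

variable {r : ℕ → Q}

lemma mem_infSet_iff_frequently {q : Q} : q ∈ infSet r ↔ ∃ᶠ m in Filter.atTop, r m = q :=
  Filter.frequently_atTop.symm

lemma eventually_mem_infSet [Finite Q] (r : ℕ → Q) : ∀ᶠ m in Filter.atTop, r m ∈ infSet r := by
  have : ∀ᶠ m in Filter.atTop, ∀ q, q ∉ infSet r → r m ≠ q :=
    Filter.eventually_all.2 fun q => by
      by_cases hq : q ∈ infSet r
      · exact Filter.Eventually.of_forall fun _ h => absurd hq h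
      · rw [mem_infSet_iff_frequently, Filter.not_frequently] at hq
        exact hq.mono fun _ hm _ => hm
  exact this.mono fun m hm => by_contra fun h => hm _ h rfl

lemma exists_gt_visit_infSet [Finite Q] {s : Q} (hs : s ∈ infSet r) (a : ℕ) :
    ∃ b, a < b ∧ r b = s ∧ infSet r ⊆ r '' Set.Icc a b := by
  have hvisit : ∀ᶠ b in Filter.atTop, ∀ q, q ∈ infSet r → q ∈ r '' Set.Icc a b :=
    Filter.eventually_all.2 fun q => by
      by_cases hq : q ∈ infSet r
      · obtain ⟨m, ham, hm⟩ := hq a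
        exact (Filter.eventually_ge_atTop m).mono fun b hb _ => ⟨m, ⟨ham, hb⟩, hm⟩
      · exact Filter.Eventually.of_forall fun _ h => absurd h hq
  obtain ⟨b, ⟨hab, hb⟩, hbs⟩ :=
    ((Filter.eventually_gt_atTop a).and hvisit).and_frequently (mem_infSet_iff_frequently.1 hs)
      |>.exists
  exact ⟨b, hab, hbs, hb⟩

lemma exists_strictMono_image_Icc_eq_infSet [Finite Q] {s : Q} (hs : s ∈ infSet r) :
    ∃ n : ℕ → ℕ, StrictMono n ∧ ∀ j, r (n j) = s ∧ r '' Set.Icc (n j) (n (j + 1)) = infSet r := by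
  obtain ⟨N, hN⟩ := Filter.eventually_atTop.1 (eventually_mem_infSet r)
  obtain ⟨a, hNa, has⟩ := hs N
  choose next hnext_gt hnext_s hnext_visit using exists_gt_visit_infSet hs
  set n : ℕ → ℕ := fun j => next^[j] a
  have hn_succ : ∀ j, n (j + 1) = next (n j) := fun j => Function.iterate_succ_apply' next j a
  have hn : StrictMono n := strictMono_nat_of_lt_succ fun j => hn_succ j ▸ hnext_gt (n j)
  refine ⟨n, hn, fun j => ⟨?_, ?_⟩⟩
  · cases j with
    | zero => exact has
    | succ j => rw [hn_succ]; exact hnext_s _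
  · refine subset_antisymm ?_ (hn_succ j ▸ hnext_visit (n j))
    rintro _ ⟨t, ht, rfl⟩
    exact hN t (hNa.trans ((hn.monotone (Nat.zero_le j)).trans ht.1))

lemma infSet_eq_of_image_Icc {p : ℕ → ℕ} (hp : StrictMono p) {T : Set Q}
    (hT : ∀ j, r '' Set.Icc (p j) (p (j + 1)) = T) : infSet r = T := by
  ext q
  constructor
  · intro hq
    obtain ⟨m, hm, rfl⟩ := hq (p 0)
    obtain ⟨j, hjm, hmj⟩ := exists_le_lt_succ_of_strictMono hp hm
    exact hT j ▸ ⟨m, ⟨hjm, hmj.le⟩, rfl⟩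
  · intro hq a
    obtain ⟨t, ht, rfl⟩ := (hT a).symm ▸ hq
    exact ⟨t, (hp.id_le a).trans ht.1, rfl⟩

end InfSet

def DetAut.loopLang (A : DetAut σ Q) (s : Q) (T : Set Q) : Set (List σ) :=
  { x | x ≠ [] ∧ A.runFin s x = s ∧ { q | q ∈ List.scanl A.step s x } = T }

namespace DetAut

variable (A : DetAut σ Q) (v : ℕ → σ)

lemma runFin_run_segment {m n : ℕ} (h : m ≤ n) :
    A.runFin (A.run v m) (segment v m n) = A.run v n := by
  obtain ⟨d, rfl⟩ := Nat.exists_eq_add_of_le h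
  induction d generalizing m with
  | zero => simp [segment, runFin]
  | succ d ih =>
    rw [segment_eq_cons v (by omega), show m + (d + 1) = m + 1 + d by omega, ← ih (by omega)]
    rfl

lemma mem_scanl_run_segment {m n : ℕ} (h : m ≤ n) (q : Q) :
    q ∈ List.scanl A.step (A.run v m) (segment v m n) ↔ q ∈ A.run v '' Set.Icc m n := by
  obtain ⟨d, rfl⟩ := Nat.exists_eq_add_of_le h
  induction d generalizing m with
  | zero => simp [segment]
  | succ d ih =>
    rw [segment_eq_cons v (by omega), List.scanl_cons, List.mem_cons,
      show m + (d + 1) = m + 1 + d by omega, ← Set.insert_Icc_add_one_left_eq_Icc (by omega),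
      Set.image_insert_eq, Set.mem_insert_iff, ← ih (by omega)]
    rfl

lemma segment_mem_loopLang_iff {m n : ℕ} (h : m ≤ n) (T : Set Q) :
    segment v m n ∈ A.loopLang (A.run v m) T ↔
      m < n ∧ A.run v n = A.run v m ∧ A.run v '' Set.Icc m n = T := by
  have hscan : { q | q ∈ List.scanl A.step (A.run v m) (segment v m n) } = A.run v '' Set.Icc m n :=
    Set.ext (A.mem_scanl_run_segment v h)
  simp only [loopLang, Set.mem_ofPred_eq, hscan, A.runFin_run_segment v h,
    ← List.length_pos_iff, length_segment, Nat.sub_pos_iff_lt]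

lemma run_wcat_length (x : List σ) (w : ℕ → σ) :
    A.run (wcat x w) x.length = A.runFin A.init x := by
  rw [← A.runFin_run_segment _ (Nat.zero_le _), segment_wcat_length]
  rfl

lemma exists_wcat_mem_omegaPow_loopLang [Finite Q] {s : Q} (hs : s ∈ infSet (A.run v)) :
    ∃ x w, w ∈ omegaPow (A.loopLang s (infSet (A.run v))) ∧ v = wcat x w := by
  obtain ⟨n, hn, hblock⟩ := exists_strictMono_image_Icc_eq_infSet hs
  refine exists_wcat_mem_omegaPow hn fun j => ?_
  rw [← (hblock j).1, A.segment_mem_loopLang_iff v (hn (Nat.lt_succ_self j)).le,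
    (hblock j).1, (hblock (j + 1)).1]
  exact ⟨hn (Nat.lt_succ_self j), rfl, (hblock j).2⟩

lemma infSet_run_wcat {x : List σ} {s : Q} {T : Set Q} {w : ℕ → σ} (hx : A.runFin A.init x = s)
    (hw : w ∈ omegaPow (A.loopLang s T)) : infSet (A.run (wcat x w)) = T := by
  obtain ⟨f, hf0, hf, hfR⟩ := hw
  set p : ℕ → ℕ := fun j => x.length + f j
  have hp : StrictMono p := fun i j hij => Nat.add_lt_add_left (hf hij) _
  have hblock : ∀ j, A.run (wcat x w) (p j) = s →
      A.run (wcat x w) (p (j + 1)) = s ∧ A.run (wcat x w) '' Set.Icc (p j) (p (j + 1)) = T := by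
    intro j hj
    have := hfR j
    rw [← segment_wcat_add x, ← hj, A.segment_mem_loopLang_iff _ (hp (Nat.lt_succ_self j)).le] at this
    exact ⟨this.2.1.trans hj, this.2.2⟩
  have hrun : ∀ j, A.run (wcat x w) (p j) = s := by
    intro j
    induction j with
    | zero => simpa [p, hf0, run_wcat_length] using hx
    | succ j ih => exact (hblock j ih).1
  exact infSet_eq_of_image_Icc hp fun j => (hblock j (hrun j)).2

end DetAut

theorem trivial_rc_characterization_general {σ Q : Type*} [Fintype Q] (A : DetAut σ Q) (k : ℕ)
    (S : Fin k → Set Q) (s : Fin k → Q)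
    (hs : ∀ i, s i ∈ S i)
    (hreach : ∀ q : Q, ∃ x : List σ, A.runFin A.init x = q)
    (L : Set (ℕ → σ))
    (hL : ∀ w, w ∈ L ↔ MullerAcc A (Set.range S) w)
    (htriv : ∀ x y : List σ, RC L x y)
    (R : Fin k → Set (List σ))
    (hR : ∀ i, R i = { x | x ≠ [] ∧ A.runFin (s i) x = s i ∧
                           { q | q ∈ List.scanl A.step (s i) x } = S i }) :
    L = { v | ∃ (x : List σ) (w : ℕ → σ), (∃ i, w ∈ omegaPow (R i)) ∧ v = wcat x w } := by
  have hR_loop : ∀ i, R i = A.loopLang (s i) (S i) := hR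
  ext v
  constructor
  · intro hv
    obtain ⟨i, hi⟩ := (hL v).1 hv
    obtain ⟨x, w, hw, rfl⟩ := A.exists_wcat_mem_omegaPow_loopLang v (hi ▸ hs i)
    exact ⟨x, w, ⟨i, by rwa [hR_loop, hi]⟩, rfl⟩
  · rintro ⟨x, w, ⟨i, hw⟩, rfl⟩
    obtain ⟨x₀, hx₀⟩ := hreach (s i)
    have hx₀w : wcat x₀ w ∈ L :=
      (hL _).2 ⟨i, (A.infSet_run_wcat hx₀ (hR_loop i ▸ hw)).symm⟩
    exact (htriv x x₀ w).2 hx₀w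

/-- a regular ω-language with trivial right congruence equals
`Σ*(R₁^ω ∪ … ∪ R_k^ω)` for the loop languages of its DMA's accepting SCCs. -/
theorem trivial_rc_characterization {σ Q : Type*} [Fintype Q] (A : DetAut σ Q) (k : ℕ)
    (S : Fin k → Set Q) (s : Fin k → Q)
    (hs : ∀ i, s i ∈ S i)
    (hSCC : ∀ i, IsSCC A (S i))
    (hreach : ∀ q : Q, ∃ x : List σ, A.runFin A.init x = q)
    (L : Set (ℕ → σ))
    (hL : ∀ w, w ∈ L ↔ MullerAcc A (Set.range S) w)
    (htriv : ∀ x y : List σ, RC L x y)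
    (R : Fin k → Set (List σ))
    (hR : ∀ i, R i = { x | x ≠ [] ∧ A.runFin (s i) x = s i ∧
                           { q | q ∈ List.scanl A.step (s i) x } = S i }) :
    L = { v | ∃ (x : List σ) (w : ℕ → σ), (∃ i, w ∈ omegaPow (R i)) ∧ v = wcat x w } :=
  trivial_rc_characterization_general A k S s hs hreach L hL htriv R hR

end OmegaRC
end

section
/- The ω-language L = (aa)*b^ω over Σ = {a,b} (ω-words consisting of an even number of a's followed by infinitely many b's) is respective of its right congruence but is not non-counting. -/
/-!
Write `a = true`, `b = false`. Membership of `aⁿ b^ω` depends on the parity of `n`, so `L` is not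
non-counting. If `x u^ω ∈ L` then, since the words of `L` end in `b^ω`, `u` consists of `b`s only;
for `n ≥ 1` an ω-word `x uⁿ w` then lies in `L` exactly when `w = b^ω` and `x b^ω ∈ L`, a condition
that does not depend on `n`.
-/

namespace OmegaRC

variable {σ : Type*} {Q : Type*}

theorem wcat_length_add (x : List σ) (w : ℕ → σ) (n : ℕ) : wcat x w (x.length + n) = w n := by
  simp [wcat]

theorem wcat_append (x y : List σ) (w : ℕ → σ) : wcat (x ++ y) w = wcat x (wcat y w) := by
  funext n
  simp only [wcat, List.get_eq_getElem, List.length_append, List.getElem_append]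
  split_ifs <;> first | rfl | omega | (congr 1; omega)

theorem wcat_left_cancel_iff {x : List σ} {v w : ℕ → σ} : wcat x v = wcat x w ↔ v = w := by
  refine ⟨fun h => funext fun n => ?_, congrArg _⟩
  simpa only [wcat_length_add] using congrFun h (x.length + n)

theorem wcat_replicate_const (m : ℕ) (a : σ) :
    wcat (List.replicate m a) (fun _ => a) = fun _ => a := by
  funext n
  simp [wcat]

theorem wpow_replicate (m n : ℕ) (a : σ) : wpow (List.replicate m a) n = List.replicate (n * m) a :=
  List.flatten_replicate_replicate

theorem exists_le_wrep_eq [Inhabited σ] {u : List σ} {b : σ} (hb : b ∈ u) (N : ℕ) :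
    ∃ n ≥ N, wrep u n = b := by
  obtain ⟨i, hi, rfl⟩ := List.mem_iff_getElem.1 hb
  refine ⟨i + N * u.length, by nlinarith, ?_⟩
  rw [wrep, Nat.add_mul_mod_self_right, Nat.mod_eq_of_lt hi, List.getD_eq_getElem]

def evenTruesThenFalses : Set (ℕ → Bool) :=
  { w | ∃ k : ℕ, w = wcat (List.replicate (2 * k) true) (fun _ => false) }

theorem wcat_replicate_true_false_apply (m n : ℕ) :
    wcat (List.replicate m true) (fun _ => false) n = decide (n < m) := by
  by_cases h : n < m <;> simp [wcat, h]

theorem wcat_replicate_true_false_inj {m n : ℕ} :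
    wcat (List.replicate m true) (fun _ => false) = wcat (List.replicate n true) (fun _ => false) ↔
      m = n := by
  refine ⟨fun h => ?_, fun h => h ▸ rfl⟩
  have hm := congrFun h m
  have hn := congrFun h n
  simp only [wcat_replicate_true_false_apply, decide_eq_decide] at hm hn
  omega

theorem mem_evenTruesThenFalses_iff {w : ℕ → Bool} :
    w ∈ evenTruesThenFalses ↔ ∃ k, ∀ n, w n = decide (n < 2 * k) := by
  simp only [evenTruesThenFalses, Set.mem_ofPred_eq, funext_iff, wcat_replicate_true_false_apply]

theorem wcat_replicate_true_mem_evenTruesThenFalses_iff (n : ℕ) :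
    wcat (List.replicate n true) (fun _ => false) ∈ evenTruesThenFalses ↔ Even n := by
  simp only [evenTruesThenFalses, Set.mem_ofPred_eq, wcat_replicate_true_false_inj,
    even_iff_two_dvd, Dvd.dvd]

theorem eventually_false_of_mem_evenTruesThenFalses {w : ℕ → Bool}
    (hw : w ∈ evenTruesThenFalses) : ∃ N, ∀ n ≥ N, w n = false := by
  obtain ⟨k, hk⟩ := mem_evenTruesThenFalses_iff.1 hw
  exact ⟨2 * k, fun n hn => by simpa [Nat.not_lt.2 hn] using hk n⟩

theorem eq_false_of_wcat_mem_evenTruesThenFalses {x : List Bool} {v : ℕ → Bool}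
    (hv : v 0 = false) (hxv : wcat x v ∈ evenTruesThenFalses) : v = fun _ => false := by
  obtain ⟨k, hk⟩ := mem_evenTruesThenFalses_iff.1 hxv
  have hle : 2 * k ≤ x.length := by
    have h := hk (x.length + 0)
    rw [wcat_length_add, hv] at h
    simpa using h
  funext n
  have h := hk (x.length + n)
  rw [wcat_length_add] at h
  rw [h, decide_eq_false_iff_not]
  omega

theorem wcat_append_replicate_false_mem_evenTruesThenFalses_iff (x : List Bool) {m : ℕ}
    (hm : 0 < m) (w : ℕ → Bool) :
    wcat (x ++ List.replicate m false) w ∈ evenTruesThenFalses ↔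
      w = (fun _ => false) ∧ wcat x (fun _ => false) ∈ evenTruesThenFalses := by
  rw [wcat_append]
  constructor
  · intro h
    have hfalse := eq_false_of_wcat_mem_evenTruesThenFalses (by simp [wcat, hm]) h
    rw [hfalse] at h
    rw [← wcat_replicate_const m false, wcat_left_cancel_iff] at hfalse
    exact ⟨hfalse, h⟩
  · rintro ⟨rfl, h⟩
    rwa [wcat_replicate_const]

theorem respective_evenTruesThenFalses : Respective evenTruesThenFalses := by
  refine ⟨0, fun n hn x u hu hxu w => ?_⟩
  have hu_false : u = List.replicate u.length false := by
    refine List.eq_replicate_iff.2 ⟨rfl, fun b hb => ?_⟩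
    obtain ⟨N, hN⟩ := eventually_false_of_mem_evenTruesThenFalses hxu
    obtain ⟨i, hi, rfl⟩ := exists_le_wrep_eq hb N
    rw [← wcat_length_add x (wrep u)]
    exact hN _ (by omega)
  have hlen : 0 < u.length := List.length_pos_iff.2 hu
  rw [hu_false, wpow_replicate, wpow_replicate,
    wcat_append_replicate_false_mem_evenTruesThenFalses_iff _ (Nat.mul_pos hn hlen),
    wcat_append_replicate_false_mem_evenTruesThenFalses_iff _ (Nat.mul_pos n.succ_pos hlen)]

theorem not_nonCounting_evenTruesThenFalses : ¬ NonCounting evenTruesThenFalses := by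
  rintro ⟨n₀, h⟩
  have h := h (2 * n₀ + 2) (by omega) [] [true] (fun _ => false)
  simp only [List.nil_append, wpow, List.flatten_replicate_singleton,
    wcat_replicate_true_mem_evenTruesThenFalses_iff] at h
  have heven : Even (2 * n₀ + 2) := ⟨n₀ + 1, by ring⟩
  exact Nat.even_add_one.1 (h.1 heven) heven

/-- `(aa)*b^ω` is respective of its right congruence but not non-counting. -/
theorem aa_bw_respective_not_nonCounting :
    let L : Set (ℕ → Bool) :=
      { w | ∃ k : ℕ, w = wcat (List.replicate (2 * k) true) (fun _ => false) }
    Respective L ∧ ¬ NonCounting L :=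
  ⟨respective_evenTruesThenFalses, not_nonCounting_evenTruesThenFalses⟩

end OmegaRC
end

section
/- Consider the deterministic Büchi automaton P over Σ = {a,b,c} with states {1,2,3,4,⊥}, initial state 1, accepting states {3,4}, and transitions: from 1: a→1, c→1, b→2; from 2: b→1, c→1, a→3; from 3: a→4, otherwise →⊥; from 4: c→3, otherwise →⊥; ⊥ is a rejecting sink. Then the language L = ⟦P⟧ is respective of its right congruence, but its complement L^c = Σ^ω ∖ L is not respective of its right congruence: b^ω ∈ L^c yet for every n, b^n ≁_{L^c} b^{n+1}. -/
/-! In `P` the accepting states 3 and 4 form a cycle that can only be left into the sink `⊥`, and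
on this cycle the current state is determined by the next letter. Hence along an accepting run on
`x u^ω` the state after `x u^k` is eventually the accepting state determined by the first letter
of `u`, a fixed point of reading `u`; as the only other live states are 1 and 2, the orbit gets there
within two blocks, so `x u^n` and `x u^(n+1)` lead to the same state for `n ≥ 2`. In the
complement, each `b` toggles between 1 and 2, and `b a (a c)^ω` is accepted from 1 but not
from 2. -/

namespace OmegaRC

variable {σ : Type*} {Q : Type*}

/-- Transition function of the DBA `P` (states 1,2,3,4,⊥ ↦ 0,1,2,3,4; letters a,b,c ↦ 0,1,2). -/
def Pstep : Fin 5 → Fin 3 → Fin 5 := fun q a =>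
  if q = 0 then (if a = 1 then 1 else 0)
  else if q = 1 then (if a = 0 then 2 else 0)
  else if q = 2 then (if a = 0 then 3 else 4)
  else if q = 3 then (if a = 2 then 2 else 4)
  else 4

theorem Function.iterate_eq_of_forall_mem {α : Type*} {f : α → α} {x c : α} (hc : f c = c)
    {s : Finset α} (hs : ∀ k, f^[k] x ∈ s) {N : ℕ} (hN : f^[N] x = c) {k : ℕ}
    (hk : s.card - 1 ≤ k) : f^[k] x = c := by
  classical
  have hex : ∃ n, f^[n] x = c := ⟨N, hN⟩
  set n := Nat.find hex
  -- Before first reaching `c` the orbit cannot repeat, since a repetition would make it periodic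
  -- through values different from `c`.
  have hinj : Set.InjOn (f^[·] x) (Finset.range n) := by
    intro i hi j hj hij
    by_contra hne
    wlog hlt : i < j generalizing i j
    · exact this hj hi hij.symm (Ne.symm hne) (by omega)
    have hper : Function.IsPeriodicPt f (j - i) (f^[i] x) := by
      simp only [Function.IsPeriodicPt, Function.IsFixedPt, ← Function.iterate_add_apply,
        Nat.sub_add_cancel hlt.le]
      exact hij.symm
    have hlt_n : j < n := Finset.mem_range.mp hj
    refine Nat.find_min hex (m := (n - i) % (j - i) + i) ?_ ?_
    · have := Nat.mod_lt (n - i) (Nat.sub_pos_of_lt hlt)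
      omega
    · rw [Function.iterate_add_apply, hper.iterate_mod_apply, ← Function.iterate_add_apply,
        Nat.sub_add_cancel (by omega)]
      exact Nat.find_spec hex
  have hmaps : Set.MapsTo (f^[·] x) (Finset.range n) (s.erase c) := by
    intro i hi
    exact Finset.mem_erase.mpr ⟨Nat.find_min hex (Finset.mem_range.mp hi), hs i⟩
  have hn : n ≤ s.card - 1 := by
    simpa [Finset.card_erase_of_mem (hN ▸ hs N)] using Finset.card_le_card_of_injOn _ hmaps hinj
  rw [← Nat.sub_add_cancel (hn.trans hk), Function.iterate_add_apply, Nat.find_spec hex,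
    Function.iterate_fixed hc]

theorem wrep_of_lt [Inhabited σ] {u : List σ} {i : ℕ} (hi : i < u.length) :
    wrep u i = u[i] := by
  simp [wrep, Nat.mod_eq_of_lt hi, hi]

theorem wrep_mul_length_add [Inhabited σ] (u : List σ) (k i : ℕ) :
    wrep u (k * u.length + i) = wrep u i := by
  simp [wrep, Nat.add_comm (k * u.length), Nat.add_mul_mod_self_right]

theorem wrep_mem [Inhabited σ] {u : List σ} (hu : u ≠ []) (n : ℕ) : wrep u n ∈ u := by
  have hn := Nat.mod_lt n (List.length_pos_iff.mpr hu)
  have hget : wrep u n = u[n % u.length] := by simp [wrep, hn]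
  exact hget ▸ List.getElem_mem hn

theorem wrep_singleton [Inhabited σ] (a : σ) : wrep [a] = fun _ => a := by
  funext n
  simp [wrep, Nat.mod_one]

theorem wpow_succ (u : List σ) (n : ℕ) : wpow u (n + 1) = wpow u n ++ u := by
  simp [wpow, List.replicate_succ']

theorem wpow_singleton (a : σ) (n : ℕ) : wpow [a] n = List.replicate n a :=
  List.flatten_replicate_singleton

namespace DetAut

variable (A : DetAut σ Q)

def startAt (q : Q) : DetAut σ Q := { A with init := q }

theorem runFin_append (q : Q) (x y : List σ) :
    A.runFin q (x ++ y) = A.runFin (A.runFin q x) y :=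
  List.foldl_append

theorem runFin_wpow (q : Q) (u : List σ) (n : ℕ) :
    A.runFin q (wpow u n) = (A.runFin · u)^[n] q := by
  induction n with
  | zero => rfl
  | succ n ih => rw [wpow_succ, runFin_append, ih, Function.iterate_succ_apply']

theorem run_add (w : ℕ → σ) (m n : ℕ) :
    A.run w (m + n) = (A.startAt (A.run w m)).run (fun i => w (m + i)) n := by
  induction n with
  | zero => rfl
  | succ n ih => exact congrArg (A.step · _) ih

theorem run_length_eq_runFin (x : List σ) (w : ℕ → σ)
    (hw : ∀ i (hi : i < x.length), w i = x[i]) : A.run w x.length = A.runFin A.init x := by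
  induction x generalizing A w with
  | nil => rfl
  | cons a x ih =>
    rw [List.length_cons, Nat.add_comm, run_add]
    refine (ih _ _ fun i hi => ?_).trans ?_
    · simpa [Nat.add_comm 1 i] using hw (1 + i) (by simpa using by omega)
    · simp only [runFin, startAt, List.foldl_cons]
      rw [show A.run w 1 = A.step A.init a from congrArg (A.step A.init) (hw 0 (by simp))]

theorem run_wcat (x : List σ) (w : ℕ → σ) (n : ℕ) :
    A.run (wcat x w) (x.length + n) = (A.startAt (A.runFin A.init x)).run w n := by
  rw [run_add, A.run_length_eq_runFin x _ fun i hi => by simp [wcat, hi]]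
  simp only [wcat_length_add]

theorem run_wrep_mul_length [Inhabited σ] (u : List σ) (k : ℕ) :
    A.run (wrep u) (k * u.length) = (A.runFin · u)^[k] A.init := by
  induction k with
  | zero => simp [run]
  | succ k ih =>
    rw [Nat.succ_mul, run_add, Function.iterate_succ_apply', ← ih]
    simp only [wrep_mul_length_add]
    exact (A.startAt _).run_length_eq_runFin u _ fun i hi => wrep_of_lt hi

end DetAut

section Buchi

variable {A : DetAut σ Q} {F S : Set Q} {w : ℕ → σ}

theorem DetAut.run_mem_of_le (hS : ∀ n, ∀ q ∈ S, A.step q (w n) ∈ S) {p : ℕ}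
    (hp : A.run w p ∈ S) {m : ℕ} (hpm : p ≤ m) : A.run w m ∈ S :=
  Nat.le_induction hp (fun n _ hn => hS n _ hn) m hpm

theorem not_buchiAcc_of_run_mem (hS : ∀ n, ∀ q ∈ S, A.step q (w n) ∈ S) {p : ℕ}
    (hp : A.run w p ∈ S) (hSF : Disjoint S F) : ¬ BuchiAcc A F w := fun hacc =>
  let ⟨_, hpm, hmF⟩ := hacc p
  hSF.notMem_of_mem_left (A.run_mem_of_le hS hp hpm) hmF

theorem buchiAcc_wcat_iff (x : List σ) :
    BuchiAcc A F (wcat x w) ↔ BuchiAcc (A.startAt (A.runFin A.init x)) F w := by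
  refine ⟨fun h n => ?_, fun h n => ?_⟩
  · obtain ⟨m, hnm, hmF⟩ := h (x.length + n)
    refine ⟨m - x.length, by omega, ?_⟩
    rwa [← A.run_wcat, Nat.add_sub_cancel' (by omega)]
  · obtain ⟨m, hnm, hmF⟩ := h n
    exact ⟨x.length + m, by omega, by rwa [A.run_wcat]⟩

theorem buchiAcc_wrep_of_runFin_eq [Inhabited σ] {u : List σ} (hu : u ≠ [])
    (hloop : A.runFin A.init u = A.init) (hF : A.init ∈ F) : BuchiAcc A F (wrep u) := fun n =>
  ⟨n * u.length, Nat.le_mul_of_pos_right n (List.length_pos_iff.mpr hu), by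
    rwa [A.run_wrep_mul_length, Function.iterate_fixed hloop]⟩

theorem rc_of_runFin_eq {x y : List σ} (h : A.runFin A.init x = A.runFin A.init y) :
    RC {w | BuchiAcc A F w} x y := fun w => by
  simp only [Set.mem_ofPred_eq, buchiAcc_wcat_iff, h]

theorem RC.buchiAcc_startAt_iff {x y : List σ} (h : RC {w | BuchiAcc A F w} x y)
    (w : ℕ → σ) : BuchiAcc (A.startAt (A.runFin A.init x)) F w ↔
      BuchiAcc (A.startAt (A.runFin A.init y)) F w := by
  simpa only [Set.mem_ofPred_eq, buchiAcc_wcat_iff] using h w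

end Buchi

theorem rc_compl_iff {L : Set (ℕ → σ)} {x y : List σ} : RC Lᶜ x y ↔ RC L x y :=
  forall_congr' fun _ => not_iff_not

def Paut : DetAut (Fin 3) (Fin 5) := ⟨0, Pstep⟩

def Plang : Set (ℕ → Fin 3) := {w | BuchiAcc Paut {2, 3} w}

/-- The only accepting state with a transition on `l` that avoids the sink `⊥ = 4`. -/
def accStateReading (l : Fin 3) : Fin 5 := if l = 0 then 2 else 3

theorem Pstep_sink : ∀ l, Pstep 4 l = 4 := by decide

theorem Pstep_mem_of_mem_acc_or_sink :
    ∀ q ∈ ({4, 2, 3} : Set (Fin 5)), ∀ l, Pstep q l ∈ ({4, 2, 3} : Set (Fin 5)) := by decide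

theorem mem_of_Pstep_ne_sink :
    ∀ q l, Pstep q l ≠ 4 → q ∈ ({0, 1, accStateReading l} : Finset (Fin 5)) := by
  decide

section AcceptingRun

variable {q : Fin 5} {w : ℕ → Fin 3} (hacc : BuchiAcc (Paut.startAt q) {2, 3} w)
include hacc

theorem Paut_run_ne_sink (p : ℕ) : (Paut.startAt q).run w p ≠ 4 := fun hp =>
  not_buchiAcc_of_run_mem (S := {4}) (fun _ _ hq => hq ▸ Pstep_sink _) hp (by simp) hacc

theorem Paut_run_mem_of_le {p m : ℕ} (hp : (Paut.startAt q).run w p ∈ ({2, 3} : Set (Fin 5)))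
    (hpm : p ≤ m) : (Paut.startAt q).run w m ∈ ({2, 3} : Set (Fin 5)) := by
  have hm := (Paut.startAt q).run_mem_of_le (fun _ q hq => Pstep_mem_of_mem_acc_or_sink q hq _)
    (Set.mem_insert_of_mem 4 hp) hpm
  exact hm.resolve_left (Paut_run_ne_sink hacc m)

theorem Paut_run_mem_reading (p : ℕ) :
    (Paut.startAt q).run w p ∈ ({0, 1, accStateReading (w p)} : Finset (Fin 5)) :=
  mem_of_Pstep_ne_sink _ _ (Paut_run_ne_sink hacc (p + 1))

end AcceptingRun

theorem accStateReading_eq_of_mem : ∀ (q : Fin 5) (l : Fin 3),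
    q ∈ ({0, 1, accStateReading l} : Finset (Fin 5)) → q ∈ ({2, 3} : Set (Fin 5)) →
      q = accStateReading l := by
  decide

theorem Paut_runFin_wpow_succ {q : Fin 5} {a : Fin 3} {t : List (Fin 3)}
    (hacc : BuchiAcc (Paut.startAt q) {2, 3} (wrep (a :: t))) {n : ℕ} (hn : 2 ≤ n) :
    Paut.runFin q (wpow (a :: t) (n + 1)) = Paut.runFin q (wpow (a :: t) n) := by
  set u := a :: t
  set f := (Paut.runFin · u)
  have horbit (k : ℕ) : f^[k] q = (Paut.startAt q).run (wrep u) (k * u.length) :=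
    ((Paut.startAt q).run_wrep_mul_length u k).symm
  have hmem (k : ℕ) : f^[k] q ∈ ({0, 1, accStateReading a} : Finset (Fin 5)) := by
    have hread := Paut_run_mem_reading hacc (k * u.length)
    rwa [← horbit, show wrep u (k * u.length) = a by simp [wrep, u]] at hread
  have hacc_eq (k : ℕ) (hk : f^[k] q ∈ ({2, 3} : Set (Fin 5))) : f^[k] q = accStateReading a :=
    accStateReading_eq_of_mem _ _ (hmem k) hk
  obtain ⟨p, -, hp⟩ := hacc 0
  have hreach (k : ℕ) (hpk : p ≤ k) : f^[k] q ∈ ({2, 3} : Set (Fin 5)) :=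
    horbit k ▸ Paut_run_mem_of_le hacc hp (hpk.trans (Nat.le_mul_of_pos_right k (by simp [u])))
  have hpc : f^[p] q = accStateReading a := hacc_eq p (hreach p le_rfl)
  have hfix : f (accStateReading a) = accStateReading a :=
    calc f (accStateReading a) = f^[p + 1] q := by rw [Function.iterate_succ_apply', hpc]
      _ = accStateReading a := hacc_eq _ (hreach _ (Nat.le_succ p))
  have hcard : ({0, 1, accStateReading a} : Finset (Fin 5)).card - 1 ≤ 2 := by
    have := Finset.card_le_three (a := (0 : Fin 5)) (b := 1) (c := accStateReading a)
    omega
  rw [Paut.runFin_wpow, Paut.runFin_wpow,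
    Function.iterate_eq_of_forall_mem hfix hmem hpc (by omega),
    Function.iterate_eq_of_forall_mem hfix hmem hpc (by omega)]

theorem Plang_respective : Respective Plang := by
  refine ⟨1, fun n hn x u hu hx => rc_of_runFin_eq ?_⟩
  obtain ⟨a, t, rfl⟩ := List.exists_cons_of_ne_nil hu
  rw [Paut.runFin_append, Paut.runFin_append]
  exact (Paut_runFin_wpow_succ ((buchiAcc_wcat_iff x).mp hx) hn).symm

theorem b_omega_notMem_Plang : (fun _ => (1 : Fin 3)) ∉ Plang :=
  not_buchiAcc_of_run_mem (S := {0, 1}) (fun _ => by decide) (p := 0)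
    (by simp [DetAut.run, Paut]) (Set.disjoint_left.mpr (by decide))

theorem Paut_buchiAcc_ba_ac_iff {q : Fin 5} (hq : q = 0 ∨ q = 1) :
    BuchiAcc (Paut.startAt q) {2, 3} (wcat [1, 0] (wrep [0, 2])) ↔ q = 0 := by
  rw [buchiAcc_wcat_iff]
  rcases hq with rfl | rfl
  · exact iff_of_true (buchiAcc_wrep_of_runFin_eq (by simp) (by decide) (by decide)) rfl
  · refine iff_of_false (not_buchiAcc_of_run_mem (S := {0}) (fun n q hq => ?_) (p := 0) rfl
      (by simp)) (by decide)
    have hl := wrep_mem (u := [(0 : Fin 3), 2]) (by simp) n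
    simp only [Set.mem_singleton_iff] at hq ⊢
    subst hq
    simp only [List.mem_cons, List.not_mem_nil, or_false] at hl
    rcases hl with hl | hl <;> rw [hl] <;> rfl

theorem Plang_compl_not_rc_replicate (n : ℕ) :
    ¬ RC Plangᶜ (List.replicate n (1 : Fin 3)) (List.replicate (n + 1) (1 : Fin 3)) := by
  intro hrc
  have h := (rc_compl_iff.mp hrc).buchiAcc_startAt_iff (wcat [1, 0] (wrep [0, 2]))
  rw [← wpow_singleton, ← wpow_singleton, Paut.runFin_wpow, Paut.runFin_wpow,
    Function.iterate_succ_apply'] at h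
  have hr : (Paut.runFin · [1])^[n] Paut.init ∈ ({0, 1} : Set (Fin 5)) :=
    Set.MapsTo.iterate (by intro r; revert r; decide) n (by simp [Paut])
  generalize (Paut.runFin · [1])^[n] Paut.init = r at h hr
  rcases hr with rfl | rfl
  all_goals
    rw [Paut_buchiAcc_ba_ac_iff (by simp), Paut_buchiAcc_ba_ac_iff (by decide)] at h
    exact absurd h (by decide)

/-- `⟦P⟧` is respective of its right congruence but its complement is not:
`b^ω ∈ ⟦P⟧ᶜ` yet `b^n ≁ b^{n+1}` for every `n`. -/
theorem P_respective_complement_not :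
    let P : DetAut (Fin 3) (Fin 5) := ⟨0, Pstep⟩
    let L : Set (ℕ → Fin 3) := { w | BuchiAcc P ({2, 3} : Set (Fin 5)) w }
    Respective L ∧
    (fun _ => (1 : Fin 3)) ∈ Lᶜ ∧
    (∀ n : ℕ, ¬ RC Lᶜ (List.replicate n (1 : Fin 3)) (List.replicate (n + 1) (1 : Fin 3))) ∧
    ¬ Respective Lᶜ := by
  intro P L
  refine ⟨Plang_respective, b_omega_notMem_Plang, Plang_compl_not_rc_replicate, ?_⟩
  rintro ⟨n₀, hresp⟩
  have hrc := hresp (n₀ + 1) (Nat.lt_succ_self n₀) [] [1] (List.cons_ne_nil 1 [])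
    (by rw [wcat_nil, wrep_singleton]; exact b_omega_notMem_Plang)
  rw [List.nil_append, List.nil_append, wpow_singleton, wpow_singleton] at hrc
  exact Plang_compl_not_rc_replicate _ hrc

end OmegaRC
end
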